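/- For every integer h, every integer m ≥ 0 and every real number x, q^h · E_{m,q}^{(h,1)}(x+1) + E_{m,q}^{(h,1)}(x) = (1+q) · [x]_q^m (with the convention [x]_q^0 = 1 when m = 0). -/
import Mathlib


open Finset

/-- The q-number `[x]_q = (1 - q^x)/(1 - q)`, with `q^x = exp (x * log q)` (rpow). -/
noncomputable def qNum (q x : ℝ) : ℝ := (1 - q ^ x) / (1 - q)

/-- `[l]_{-q} = (1 - (-q)^l)/(1 + q)` for a natural number `l`. -/
noncomputable def qNumNeg (q : ℝ) (l : ℕ) : ℝ := (1 - (-q) ^ l) / (1 + q)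

/-- The higher-order q-Euler polynomial
`E_{m,q}^{(h,k)}(x) = ((1+q)^k/(1-q)^m) * Σ_{j=0}^m C(m,j) (-1)^j q^{jx} / Π_{i=0}^{k-1} (1 + q^{h+j-i})`. -/
noncomputable def qE (q : ℝ) (h : ℤ) (k m : ℕ) (x : ℝ) : ℝ :=
  ((1 + q) ^ k / (1 - q) ^ m) *
    ∑ j ∈ Finset.range (m + 1),
      (m.choose j : ℝ) * (-1) ^ j * q ^ ((j : ℝ) * x) /
        ∏ i ∈ Finset.range k, (1 + q ^ ((h : ℝ) + (j : ℝ) - (i : ℝ)))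

theorem stmt_6 (q : ℝ) (hq : 0 < q) (hq1 : q ≠ 1) (h : ℤ) (m : ℕ) (x : ℝ) :
    q ^ h * qE q h 1 m (x + 1) + qE q h 1 m x = (1 + q) * qNum q x ^ m := by
  have hkey : ∀ j ∈ Finset.range (m + 1),
      q ^ h * ((m.choose j : ℝ) * (-1) ^ j * q ^ ((j : ℝ) * (x + 1)) /
          ∏ i ∈ Finset.range 1, (1 + q ^ ((h : ℝ) + (j : ℝ) - (i : ℝ))))
        + (m.choose j : ℝ) * (-1) ^ j * q ^ ((j : ℝ) * x) /
          ∏ i ∈ Finset.range 1, (1 + q ^ ((h : ℝ) + (j : ℝ) - (i : ℝ)))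
      = (m.choose j : ℝ) * (-1) ^ j * (q ^ x) ^ j := by
    intro j _
    rw [Finset.prod_range_one]
    have h0 : (h : ℝ) + (j : ℝ) - (0 : ℕ) = (h : ℝ) + (j : ℝ) := by push_cast; ring
    rw [h0]
    have hD : (0 : ℝ) < 1 + q ^ ((h : ℝ) + (j : ℝ)) := by positivity
    have h1 : q ^ ((j : ℝ) * (x + 1)) = q ^ ((j : ℝ) * x) * q ^ (j : ℝ) := by
      rw [← Real.rpow_add hq]; ring_nf
    have h2 : (q : ℝ) ^ h * q ^ (j : ℝ) = q ^ ((h : ℝ) + (j : ℝ)) := by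
      rw [← Real.rpow_intCast q h, ← Real.rpow_add hq]
    have h3 : q ^ ((j : ℝ) * x) = (q ^ x) ^ j := by
      rw [mul_comm, Real.rpow_mul hq.le, Real.rpow_natCast]
    field_simp
    rw [h1, h3, ← h2]
    ring
  have hsum :
      q ^ h * (∑ j ∈ Finset.range (m + 1),
          (m.choose j : ℝ) * (-1) ^ j * q ^ ((j : ℝ) * (x + 1)) /
            ∏ i ∈ Finset.range 1, (1 + q ^ ((h : ℝ) + (j : ℝ) - (i : ℝ))))
        + (∑ j ∈ Finset.range (m + 1),
          (m.choose j : ℝ) * (-1) ^ j * q ^ ((j : ℝ) * x) /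
            ∏ i ∈ Finset.range 1, (1 + q ^ ((h : ℝ) + (j : ℝ) - (i : ℝ))))
      = (1 - q ^ x) ^ m := by
    rw [Finset.mul_sum, ← Finset.sum_add_distrib, Finset.sum_congr rfl hkey]
    rw [sub_eq_add_neg, add_comm (1 : ℝ) (-(q ^ x)), add_pow]
    refine Finset.sum_congr rfl fun j _ => ?_
    rw [neg_pow, one_pow]
    ring
  simp only [qE, qNum, pow_one, div_pow]
  have h1q : (1 : ℝ) - q ≠ 0 := sub_ne_zero.mpr (Ne.symm hq1)
  calc q ^ h * ((1 + q) / (1 - q) ^ m *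
        ∑ j ∈ Finset.range (m + 1),
          (m.choose j : ℝ) * (-1) ^ j * q ^ ((j : ℝ) * (x + 1)) /
            ∏ i ∈ Finset.range 1, (1 + q ^ ((h : ℝ) + (j : ℝ) - (i : ℝ))))
      + (1 + q) / (1 - q) ^ m *
        ∑ j ∈ Finset.range (m + 1),
          (m.choose j : ℝ) * (-1) ^ j * q ^ ((j : ℝ) * x) /
            ∏ i ∈ Finset.range 1, (1 + q ^ ((h : ℝ) + (j : ℝ) - (i : ℝ)))
      = (1 + q) / (1 - q) ^ m *
        (q ^ h * (∑ j ∈ Finset.range (m + 1),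
          (m.choose j : ℝ) * (-1) ^ j * q ^ ((j : ℝ) * (x + 1)) /
            ∏ i ∈ Finset.range 1, (1 + q ^ ((h : ℝ) + (j : ℝ) - (i : ℝ))))
        + ∑ j ∈ Finset.range (m + 1),
          (m.choose j : ℝ) * (-1) ^ j * q ^ ((j : ℝ) * x) /
            ∏ i ∈ Finset.range 1, (1 + q ^ ((h : ℝ) + (j : ℝ) - (i : ℝ)))) := by ring
    _ = (1 + q) * ((1 - q ^ x) ^ m / (1 - q) ^ m) := by rw [hsum]; ring
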